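/- If p is robust against multiple mutations, then p admits a uniform invasion barrier: there exists ε̄ ∈ (0,1) such that for every m and all mutations r¹,...,rᵐ ≠ p with proportions ε₁,...,εₘ ∈ (0, ε̄/m], the payoff u(p,w) exceeds u(rⁱ,w) for every i, where w = Σᵢεᵢrⁱ + (1-Σεᵢ)p. -/

import Mathlib

open Finset Set

noncomputable section

/-- The probability simplex in ℝᵏ. -/
def Δ' (k : ℕ) : Set (Fin k → ℝ) := stdSimplex ℝ (Fin k)

/-- Affine payoff determined by the matrix `U`. -/
def payoff {k : ℕ} (U : Fin k → Fin k → ℝ) (p q : Fin k → ℝ) : ℝ :=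
  ∑ i, ∑ j, p i * q j * U i j

/-- The pure strategy `eⁱ`. -/
def pure' {k : ℕ} (i : Fin k) : Fin k → ℝ := fun j => if j = i then 1 else 0

/-- Population state when mutations `r i` appear in proportions `ε i` against incumbent `p`. -/
def mix {k m : ℕ} (p : Fin k → ℝ) (r : Fin m → Fin k → ℝ) (ε : Fin m → ℝ) : Fin k → ℝ :=
  fun j => (∑ i, ε i * r i j) + (1 - ∑ i, ε i) * p j

/-- Evolutionarily stable strategy (ESS). -/
def IsESS {k : ℕ} (U : Fin k → Fin k → ℝ) (p : Fin k → ℝ) : Prop :=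
  p ∈ Δ' k ∧ ∀ r ∈ Δ' k, r ≠ p → ∃ e ∈ Set.Ioo (0:ℝ) 1, ∀ ε : ℝ, 0 < ε → ε ≤ e →
    payoff U p (fun j => ε * r j + (1 - ε) * p j) >
      payoff U r (fun j => ε * r j + (1 - ε) * p j)

/-- Evolutionary stability against `m` mutations. -/
def StableAgainst {k : ℕ} (U : Fin k → Fin k → ℝ) (m : ℕ) (p : Fin k → ℝ) : Prop :=
  ∀ r : Fin m → Fin k → ℝ, (∀ i, r i ∈ Δ' k) → (∀ i, r i ≠ p) →
    ∃ e ∈ Set.Ioo (0:ℝ) 1, ∀ ε : Fin m → ℝ, (∀ i, ε i ∈ Set.Ioc (0:ℝ) e) →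
      ∀ i, payoff U p (mix p r ε) > payoff U (r i) (mix p r ε)

/-- `e` is a uniform invasion barrier for `p` against `m` mutations. -/
def UniformBarrier {k : ℕ} (U : Fin k → Fin k → ℝ) (m : ℕ) (p : Fin k → ℝ) (e : ℝ) : Prop :=
  ∀ r : Fin m → Fin k → ℝ, (∀ i, r i ∈ Δ' k) → (∀ i, r i ≠ p) →
    ∀ ε : Fin m → ℝ, (∀ i, ε i ∈ Set.Ioc (0:ℝ) e) →
      ∀ i, payoff U p (mix p r ε) > payoff U (r i) (mix p r ε)

/-- Best responses to `p`. -/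
def BR {k : ℕ} (U : Fin k → Fin k → ℝ) (p : Fin k → ℝ) : Set (Fin k → ℝ) :=
  {q ∈ Δ' k | ∀ r ∈ Δ' k, payoff U r p ≤ payoff U q p}

/-- Local dominance. -/
def LocallyDominant {k : ℕ} (U : Fin k → Fin k → ℝ) (p : Fin k → ℝ) : Prop :=
  ∃ V ∈ nhdsWithin p (Δ' k), V ⊆ Δ' k ∧ ∀ s ∈ V, s ≠ p → ∀ r ∈ V, r ≠ p →
    payoff U p r ≥ payoff U s r ∧ payoff U p r > payoff U r r

/-- Strict local dominance. -/
def StrictlyLocallyDominant {k : ℕ} (U : Fin k → Fin k → ℝ) (p : Fin k → ℝ) : Prop :=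
  ∃ V ∈ nhdsWithin p (Δ' k), V ⊆ Δ' k ∧ ∀ s ∈ V, s ≠ p → ∀ r ∈ V, r ≠ p →
    payoff U p r > payoff U s r

/-!
Write `advantage U p s q = u(p,q) - u(s,q)` and `w` for the state after the mutations enter.
Two simultaneous mutations `x, y` already give `advantage x p ≥ 0`, and when `advantage x p = 0`
also `advantage x x > 0` (take `y = x`) and `advantage x q ≥ 0` for all `q` (let the share of `x`
tend to `0`). Since `advantage rⁱ w = ∑ⱼ rⁱⱼ advantage eʲ w`, it suffices to look at pure
strategies. If `advantage eʲ p > 0`, it stays positive at `w` while the total share `∑ εᵢ` is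
below a threshold `ε̄`, which can be chosen once for all `m` and all mutations because the
advantage is bounded below on the compact simplex and there are finitely many `j`; and
`εᵢ ≤ ε̄ / m` gives `∑ εᵢ ≤ ε̄`. If `advantage eʲ p = 0`, then
`advantage eʲ w ≥ εᵢ advantage eʲ rⁱ ≥ 0`. So either `rⁱ` charges a pure strategy of the first
kind, or `advantage rⁱ p = 0` and `advantage rⁱ w ≥ εᵢ advantage rⁱ rⁱ > 0`.
-/

theorem nonneg_of_forall_Ioc_pos {f : ℝ → ℝ} (hf : ContinuousAt f 0) {e : ℝ} (he : 0 < e)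
    (h : ∀ t ∈ Ioc 0 e, 0 < f t) : 0 ≤ f 0 :=
  ge_of_tendsto (hf.tendsto.mono_left nhdsWithin_le_nhds)
    (Filter.mem_of_superset (Ioc_mem_nhdsGT he) fun t ht => (h t ht).le)

theorem exists_Ioo_forall_Icc_pos {ι : Type*} [Finite ι] (a c : ι → ℝ) :
    ∃ e ∈ Ioo (0:ℝ) 1, ∀ j, 0 < a j → ∀ s ∈ Icc 0 e, 0 < (1 - s) * a j + s * c j := by
  have hev : ∀ᶠ s in nhds (0:ℝ), s < 1 ∧ ∀ j, 0 < a j → 0 < (1 - s) * a j + s * c j := by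
    refine (eventually_lt_nhds one_pos).and (Filter.eventually_all.2 fun j => ?_)
    refine Filter.eventually_imp_distrib_left.2 fun hj => ?_
    exact continuousAt_const.eventually_lt (by fun_prop) (by simpa using hj)
  obtain ⟨u, hu, hsub⟩ := exists_Ico_subset_of_mem_nhds hev ⟨1, one_pos⟩
  refine ⟨u / 2, ⟨by positivity, (hsub ⟨by positivity, by linarith⟩).1⟩, fun j hj s hs => ?_⟩
  exact (hsub ⟨hs.1, hs.2.trans_lt (by linarith)⟩).2 j hj

section Advantage

variable {k m : ℕ} (U : Fin k → Fin k → ℝ)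

theorem payoff_eq_dotProduct_mulVec (s q : Fin k → ℝ) :
    payoff U s q = s ⬝ᵥ (Matrix.of U).mulVec q := by
  simp [payoff, dotProduct, Matrix.mulVec, Finset.mul_sum, mul_comm, mul_left_comm]

theorem mix_eq_sum_smul (p : Fin k → ℝ) (r : Fin m → Fin k → ℝ) (ε : Fin m → ℝ) :
    mix p r ε = ∑ l, ε l • r l + (1 - ∑ l, ε l) • p := by
  ext j
  simp [mix, Finset.sum_apply]

theorem payoff_mix (s p : Fin k → ℝ) (r : Fin m → Fin k → ℝ) (ε : Fin m → ℝ) :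
    payoff U s (mix p r ε) = (1 - ∑ l, ε l) * payoff U s p + ∑ l, ε l * payoff U s (r l) := by
  simp only [payoff_eq_dotProduct_mulVec, mix_eq_sum_smul, Matrix.mulVec_add, Matrix.mulVec_smul,
    Matrix.mulVec_sum, dotProduct_add, dotProduct_smul, dotProduct_sum, smul_eq_mul]
  ring

theorem payoff_eq_sum_pure' (s q : Fin k → ℝ) :
    payoff U s q = ∑ j, s j * payoff U (pure' j) q := by
  simp [payoff, pure', Finset.mul_sum, mul_assoc]

theorem pure'_eq_single (j : Fin k) : pure' j = Pi.single j 1 := by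
  ext i
  simp [pure', Pi.single_apply]

theorem pure'_mem_Δ' (j : Fin k) : pure' j ∈ Δ' k :=
  pure'_eq_single j ▸ single_mem_stdSimplex ℝ j

def advantage (p s q : Fin k → ℝ) : ℝ :=
  payoff U p q - payoff U s q

variable {U}

@[simp]
theorem advantage_self (p q : Fin k → ℝ) : advantage U p p q = 0 :=
  sub_self _

theorem advantage_eq_sum_pure' {p s : Fin k → ℝ} (hs : ∑ j, s j = 1) (q : Fin k → ℝ) :
    advantage U p s q = ∑ j, s j * advantage U p (pure' j) q := by
  simp only [advantage, mul_sub, Finset.sum_sub_distrib, ← Finset.sum_mul, hs, one_mul,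
    ← payoff_eq_sum_pure']

theorem advantage_mix (p s : Fin k → ℝ) (r : Fin m → Fin k → ℝ) (ε : Fin m → ℝ) :
    advantage U p s (mix p r ε)
      = (1 - ∑ l, ε l) * advantage U p s p + ∑ l, ε l * advantage U p s (r l) := by
  simp only [advantage, payoff_mix, mul_sub, Finset.sum_sub_distrib]
  ring

theorem continuous_advantage (p s : Fin k → ℝ) : Continuous (advantage U p s) := by
  unfold advantage payoff
  fun_prop

theorem exists_le_advantage (p s : Fin k → ℝ) : ∃ c, ∀ q ∈ Δ' k, c ≤ advantage U p s q := by
  obtain ⟨c, hc⟩ := (isCompact_stdSimplex ℝ (Fin k)).bddBelow_image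
    (continuous_advantage p s).continuousOn
  exact ⟨c, fun q hq => hc ⟨q, hq, rfl⟩⟩

theorem advantage_mix_pos_of_forall_le {p s : Fin k → ℝ} {c : ℝ} {r : Fin m → Fin k → ℝ}
    {ε : Fin m → ℝ} (hc : ∀ q ∈ Δ' k, c ≤ advantage U p s q)
    (hr : ∀ l, r l ∈ Δ' k) (hε : ∀ l, 0 ≤ ε l)
    (hpos : 0 < (1 - ∑ l, ε l) * advantage U p s p + (∑ l, ε l) * c) :
    0 < advantage U p s (mix p r ε) := by
  rw [advantage_mix]
  refine hpos.trans_le (add_le_add_right ?_ _)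
  rw [Finset.sum_mul]
  exact Finset.sum_le_sum fun l _ => mul_le_mul_of_nonneg_left (hc _ (hr l)) (hε l)

theorem advantage_mix_nonneg {p s : Fin k → ℝ} {r : Fin m → Fin k → ℝ} {ε : Fin m → ℝ}
    (h0 : advantage U p s p = 0) (hs : ∀ q ∈ Δ' k, 0 ≤ advantage U p s q)
    (hr : ∀ l, r l ∈ Δ' k) (hε : ∀ l, 0 ≤ ε l) : 0 ≤ advantage U p s (mix p r ε) := by
  rw [advantage_mix, h0, mul_zero, zero_add]
  exact Finset.sum_nonneg fun l _ => mul_nonneg (hε l) (hs _ (hr l))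

theorem le_advantage_mix {p s : Fin k → ℝ} {r : Fin m → Fin k → ℝ} {ε : Fin m → ℝ}
    (h0 : advantage U p s p = 0) (hs : ∀ q ∈ Δ' k, 0 ≤ advantage U p s q)
    (hr : ∀ l, r l ∈ Δ' k) (hε : ∀ l, 0 ≤ ε l) (i : Fin m) :
    ε i * advantage U p s (r i) ≤ advantage U p s (mix p r ε) := by
  rw [advantage_mix, h0, mul_zero, zero_add]
  exact Finset.single_le_sum (f := fun l => ε l * advantage U p s (r l))
    (fun l _ => mul_nonneg (hε l) (hs _ (hr l))) (Finset.mem_univ i)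

end Advantage

namespace StableAgainst

variable {k : ℕ} {U : Fin k → Fin k → ℝ} {p : Fin k → ℝ}

theorem exists_advantage_mix_two_pos (h : StableAgainst U 2 p) {x y : Fin k → ℝ}
    (hx : x ∈ Δ' k) (hy : y ∈ Δ' k) (hxp : x ≠ p) (hyp : y ≠ p) :
    ∃ e > 0, ∀ ε₀ ∈ Ioc (0:ℝ) e, ∀ ε₁ ∈ Ioc (0:ℝ) e, 0 < (1 - (ε₀ + ε₁)) * advantage U p x p
      + ε₀ * advantage U p x x + ε₁ * advantage U p x y := by
  obtain ⟨e, he, H⟩ := h ![x, y] (Fin.forall_fin_two.2 ⟨hx, hy⟩) (Fin.forall_fin_two.2 ⟨hxp, hyp⟩)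
  refine ⟨e, he.1, fun ε₀ h₀ ε₁ h₁ => ?_⟩
  have hwin := sub_pos.2 (H ![ε₀, ε₁] (Fin.forall_fin_two.2 ⟨h₀, h₁⟩) 0)
  rw [← advantage, advantage_mix, Fin.sum_univ_two, Fin.sum_univ_two] at hwin
  simpa [add_assoc] using hwin

theorem advantage_nonneg (h : StableAgainst U 2 p) {q : Fin k → ℝ} (hq : q ∈ Δ' k) :
    0 ≤ advantage U p q p := by
  rcases eq_or_ne q p with rfl | hqp
  · simp
  obtain ⟨e, he, H⟩ := h.exists_advantage_mix_two_pos hq hq hqp hqp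
  simpa using nonneg_of_forall_Ioc_pos (by fun_prop) he fun t ht => H t ht t ht

theorem advantage_self_pos (h : StableAgainst U 2 p) {q : Fin k → ℝ} (hq : q ∈ Δ' k)
    (hqp : q ≠ p) (h0 : advantage U p q p = 0) : 0 < advantage U p q q := by
  obtain ⟨e, he, H⟩ := h.exists_advantage_mix_two_pos hq hq hqp hqp
  have hwin := H e ⟨he, le_rfl⟩ e ⟨he, le_rfl⟩
  rw [h0] at hwin
  nlinarith

theorem advantage_nonneg_of_eq_zero (h : StableAgainst U 2 p) {x q : Fin k → ℝ} (hx : x ∈ Δ' k)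
    (h0 : advantage U p x p = 0) (hq : q ∈ Δ' k) : 0 ≤ advantage U p x q := by
  rcases eq_or_ne x p with rfl | hxp
  · simp
  rcases eq_or_ne q p with rfl | hqp
  · exact h0.ge
  obtain ⟨e, he, H⟩ := h.exists_advantage_mix_two_pos hx hq hxp hqp
  have hlim := nonneg_of_forall_Ioc_pos (by fun_prop) he fun t ht => H t ht e ⟨he, le_rfl⟩
  simp only [h0, mul_zero, zero_mul, zero_add] at hlim
  exact nonneg_of_mul_nonneg_right hlim he

theorem advantage_mix_pos {m : ℕ} (h : StableAgainst U 2 p) {c : Fin k → ℝ}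
    (hc : ∀ j, ∀ q ∈ Δ' k, c j ≤ advantage U p (pure' j) q) {r : Fin m → Fin k → ℝ}
    (hr : ∀ l, r l ∈ Δ' k) (hrp : ∀ l, r l ≠ p) {ε : Fin m → ℝ} (hε : ∀ l, 0 < ε l)
    (hpos : ∀ j, 0 < advantage U p (pure' j) p →
      0 < (1 - ∑ l, ε l) * advantage U p (pure' j) p + (∑ l, ε l) * c j) (i : Fin m) :
    0 < advantage U p (r i) (mix p r ε) := by
  set w := mix p r ε
  have hε' : ∀ l, 0 ≤ ε l := fun l => (hε l).le
  have hnash := fun j => h.advantage_nonneg (pure'_mem_Δ' j)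
  have htie : ∀ j, advantage U p (pure' j) p = 0 → ∀ q ∈ Δ' k, 0 ≤ advantage U p (pure' j) q :=
    fun j hj _ => h.advantage_nonneg_of_eq_zero (pure'_mem_Δ' j) hj
  have hgain : ∀ j, 0 < advantage U p (pure' j) p → 0 < advantage U p (pure' j) w :=
    fun j hj => advantage_mix_pos_of_forall_le (hc j) hr hε' (hpos j hj)
  have hnonneg : ∀ j, 0 ≤ advantage U p (pure' j) w := fun j =>
    (hnash j).eq_or_lt.elim (fun hj => advantage_mix_nonneg hj.symm (htie j hj.symm) hr hε')
      (fun hj => (hgain j hj).le)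
  have hri := (hr i).2
  rw [advantage_eq_sum_pure' hri]
  by_cases hsupp : ∃ j, 0 < r i j ∧ 0 < advantage U p (pure' j) p
  · obtain ⟨j, hrj, hj⟩ := hsupp
    exact Finset.sum_pos' (fun j _ => mul_nonneg ((hr i).1 j) (hnonneg j))
      ⟨j, Finset.mem_univ j, mul_pos hrj (hgain j hj)⟩
  push Not at hsupp
  have hsupp_tie : ∀ j, 0 < r i j → advantage U p (pure' j) p = 0 :=
    fun j hj => (hsupp j hj).antisymm (hnash j)
  have hself : 0 < advantage U p (r i) (r i) := by
    refine h.advantage_self_pos (hr i) (hrp i) ?_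
    rw [advantage_eq_sum_pure' hri]
    refine Finset.sum_eq_zero fun j _ => ?_
    rcases ((hr i).1 j).eq_or_lt with h0 | hj
    · rw [← h0, zero_mul]
    · rw [hsupp_tie j hj, mul_zero]
  have hscaled := mul_pos (hε i) hself
  rw [advantage_eq_sum_pure' hri, Finset.mul_sum] at hscaled
  refine hscaled.trans_le (Finset.sum_le_sum fun j _ => ?_)
  rcases ((hr i).1 j).eq_or_lt with h0 | hj
  · rw [← h0, zero_mul, mul_zero, zero_mul]
  · rw [mul_left_comm]
    exact mul_le_mul_of_nonneg_left
      (le_advantage_mix (hsupp_tie j hj) (htie j (hsupp_tie j hj)) hr hε' i) hj.le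

end StableAgainst

theorem stmt_11_general {k : ℕ} (U : Fin k → Fin k → ℝ) (p : Fin k → ℝ)
    (h : ∀ m : ℕ, 2 ≤ m → StableAgainst U m p) :
    ∃ e ∈ Set.Ioo (0:ℝ) 1, ∀ m : ℕ, 0 < m →
      ∀ r : Fin m → Fin k → ℝ, (∀ i, r i ∈ Δ' k) → (∀ i, r i ≠ p) →
        ∀ ε : Fin m → ℝ, (∀ i, ε i ∈ Set.Ioc (0:ℝ) (e / m)) →
          ∀ i, payoff U p (mix p r ε) > payoff U (r i) (mix p r ε) := by
  choose c hc using fun j => exists_le_advantage (U := U) p (pure' j)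
  obtain ⟨e, he, hpos⟩ := exists_Ioo_forall_Icc_pos (fun j => advantage U p (pure' j) p) c
  refine ⟨e, he, fun m hm r hr hrp ε hε i => ?_⟩
  have hsum : ∑ l, ε l ∈ Icc 0 e := by
    refine ⟨Finset.sum_nonneg fun l _ => (hε l).1.le, ?_⟩
    calc ∑ l, ε l ≤ Finset.card (Finset.univ : Finset (Fin m)) • (e / m) :=
          Finset.sum_le_card_nsmul _ _ _ fun l _ => (hε l).2
      _ = e := by
        rw [Finset.card_univ, Fintype.card_fin, nsmul_eq_mul]
        exact mul_div_cancel₀ e (Nat.cast_ne_zero.2 hm.ne')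
  exact sub_pos.1 ((h 2 le_rfl).advantage_mix_pos hc hr hrp (fun l => (hε l).1)
    (fun j hj => hpos j hj _ hsum) i)

theorem stmt_11 {k : ℕ} (U : Fin k → Fin k → ℝ) (p : Fin k → ℝ) (hp : p ∈ Δ' k)
    (h : ∀ m : ℕ, 2 ≤ m → StableAgainst U m p) :
    ∃ e ∈ Set.Ioo (0:ℝ) 1, ∀ m : ℕ, 0 < m →
      ∀ r : Fin m → Fin k → ℝ, (∀ i, r i ∈ Δ' k) → (∀ i, r i ≠ p) →
        ∀ ε : Fin m → ℝ, (∀ i, ε i ∈ Set.Ioc (0:ℝ) (e / m)) →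
          ∀ i, payoff U p (mix p r ε) > payoff U (r i) (mix p r ε) :=
  stmt_11_general U p h
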